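/- arXiv:1906.11629 — 8 statements merged into one kernel-verified Lean document; each statement's English description precedes it below -/
import Mathlib

section
/- Let r, s, t be real numbers with t ≠ 0 and let (w_n) satisfy w_{n+1} = r·w_n + s·w_{n-1} + t·w_{n-2} for all n ≥ 0 with initial values w_{-2}, w_{-1}, w_0. Then for all n ≥ 0, w_n = V_{n+1}·w_0 + (V_{n+2} - r·V_{n+1})·w_{-1} + t·V_n·w_{-2}, where (V_n) is the generalized Tribonacci sequence defined by V_0 = 0, V_1 = 1, V_2 = r and V_{n+3} = r·V_{n+2} + s·V_{n+1} + t·V_n. -/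
theorem stmt_2 (r s t : ℝ) (ht : t ≠ 0) (V : ℕ → ℝ) (w : ℤ → ℝ)
    (hV0 : V 0 = 0) (hV1 : V 1 = 1) (hV2 : V 2 = r)
    (hV : ∀ n : ℕ, V (n + 3) = r * V (n + 2) + s * V (n + 1) + t * V n)
    (hw : ∀ n : ℤ, 0 ≤ n → w (n + 1) = r * w n + s * w (n - 1) + t * w (n - 2)) :
    ∀ n : ℕ, w (n : ℤ) =
      V (n + 1) * w 0 + (V (n + 2) - r * V (n + 1)) * w (-1) + t * V n * w (-2) := by
  intro n
  induction n using Nat.strong_induction_on with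
  | _ n ih =>
    match n with
    | 0 => simp [hV0, hV1, hV2]
    | 1 =>
      have h := hw 0 le_rfl
      norm_num at h
      have e : ((1 : ℕ) : ℤ) = 1 := by norm_num
      have hV3 : V 3 = r * V 2 + s * V 1 + t * V 0 := hV 0
      rw [e, h, hV3, hV0, hV1, hV2]
      ring
    | 2 =>
      have h0 := hw 0 le_rfl
      norm_num at h0
      have h1 := hw 1 one_pos.le
      norm_num at h1
      have e : ((2 : ℕ) : ℤ) = 2 := by norm_num
      have hV3 : V 3 = r * V 2 + s * V 1 + t * V 0 := hV 0
      have hV4 : V 4 = r * V 3 + s * V 2 + t * V 1 := hV 1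
      rw [e, h1, h0, hV4, hV3, hV0, hV1, hV2]
      ring
    | (m + 3) =>
      have h := hw (m + 2) (by positivity)
      have e1 : ((m : ℕ) : ℤ) + 2 + 1 = ((m + 3 : ℕ) : ℤ) := by push_cast; ring
      have e2 : ((m : ℕ) : ℤ) + 2 = ((m + 2 : ℕ) : ℤ) := by push_cast; ring
      have e3 : ((m : ℕ) : ℤ) + 2 - 1 = ((m + 1 : ℕ) : ℤ) := by push_cast; ring
      have e4 : ((m : ℕ) : ℤ) + 2 - 2 = ((m : ℕ) : ℤ) := by push_cast; ring
      rw [e1, e3, e4, e2] at h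
      have a1 : V (m + 3 + 2) = r * V (m + 2 + 2) + s * V (m + 1 + 2) + t * V (m + 2) := by
        rw [show m + 3 + 2 = m + 2 + 3 from by ring]; exact hV (m + 2)
      have a2 : V (m + 3 + 1) = r * V (m + 2 + 1) + s * V (m + 1 + 1) + t * V (m + 1) := by
        rw [show m + 3 + 1 = m + 1 + 3 from by ring]; exact hV (m + 1)
      have a3 : V (m + 3) = r * V (m + 2) + s * V (m + 1) + t * V m := hV m
      rw [h, ih (m + 2) (by omega), ih (m + 1) (by omega), ih m (by omega), a1, a2, a3]
      ring
end

section
/- Let α, β, γ be real with γ ≠ 0 and set r = β/γ, s = α/γ, t = 1/γ. Let (V_n) be the generalized Tribonacci sequence with parameters r, s, t (V_0 = 0, V_1 = 1, V_2 = r). If (x_n)_{n ≥ -1} satisfies x_{n+1} = γ / (x_n(x_{n-1}+α)+β) and for each n ≥ -1 the expression t·V_n·x_{-1}·x_0 + (V_{n+2} - r·V_{n+1})·x_0 + V_{n+1} is nonzero, then for all n ≥ 0, x_n = (t·V_{n-1}·x_{-1}·x_0 + (V_{n+1} - r·V_n)·x_0 + V_n) / (t·V_n·x_{-1}·x_0 +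 (V_{n+2} - r·V_{n+1})·x_0 + V_{n+1}). -/
/-!
The numerators `N n = t V(n-1) x₋₁ x₀ + (V(n+1) - r V n) x₀ + V n` are a fixed linear combination of
shifts of `V`, so they satisfy the Tribonacci recurrence `N (n+3) = r N (n+2) + s N (n+1) + t N n`,
which after multiplication by `γ` reads `γ N (n+2) = N (n-1) + α N n + β N (n+1)`. This is exactly
the linearization of the rational recurrence under the substitution `x n = N n / N (n+1)`, and the
initial values match because `V (-1) = 0` and `t V (-2) = 1`; induction does the rest.
-/

def IsTribonacci {R : Type*} [Semiring R] (r s t : R) (V : ℤ → R) : Prop :=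
  ∀ n : ℤ, V (n + 3) = r * V (n + 2) + s * V (n + 1) + t * V n

namespace IsTribonacci

theorem shift_combination {R : Type*} [CommRing R] {r s t : R} {V : ℤ → R}
    (hV : IsTribonacci r s t V) (a b c : R) :
    IsTribonacci r s t (fun n => a * V (n - 1) + b * V n + c * V (n + 1)) := by
  intro n
  have h₁ := hV (n - 1)
  have h₂ := hV n
  have h₃ := hV (n + 1)
  ring_nf at h₁ h₂ h₃ ⊢
  linear_combination a * h₁ + b * h₂ + c * h₃

variable {K : Type*} [Field K] {r s t : K} {V : ℤ → K}

theorem apply_neg_one (hV : IsTribonacci r s t V) (ht : t ≠ 0)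
    (hV0 : V 0 = 0) (hV1 : V 1 = 1) (hV2 : V 2 = r) : V (-1) = 0 := by
  have h := hV (-1)
  norm_num [hV0, hV1, hV2] at h
  exact h.resolve_left ht

theorem mul_apply_neg_two (hV : IsTribonacci r s t V) (ht : t ≠ 0)
    (hV0 : V 0 = 0) (hV1 : V 1 = 1) (hV2 : V 2 = r) : t * V (-2) = 1 := by
  have h := hV (-2)
  norm_num [hV0, hV1, hV.apply_neg_one ht hV0 hV1 hV2] at h
  exact h.symm

end IsTribonacci

section Linearization

variable {K : Type*} [Field K]

theorem div_mul_div_add_add_eq_div {α β γ a b c d : K} (hγ : γ ≠ 0) (hb : b ≠ 0) (hc : c ≠ 0)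
    (h : γ * d = a + α * b + β * c) :
    γ / (b / c * (a / b + α) + β) = c / d := by
  have hden : b / c * (a / b + α) + β = γ * d / c := by
    rw [h]
    field_simp
  rw [hden, div_div_eq_mul_div, mul_div_mul_left _ _ hγ]

theorem eq_div_of_isTribonacci {α β γ : K} (hγ : γ ≠ 0) {x N : ℤ → K}
    (hx : ∀ n : ℤ, 0 ≤ n → x (n + 1) = γ / (x n * (x (n - 1) + α) + β))
    (hN : IsTribonacci (β / γ) (α / γ) (1 / γ) N) (hN_ne : ∀ n : ℤ, 0 ≤ n → N n ≠ 0)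
    (hx_neg_one : x (-1) = N (-1) / N 0) (hx_zero : x 0 = N 0 / N 1) :
    ∀ n : ℤ, 0 ≤ n → x n = N n / N (n + 1) := by
  have hlin (n : ℤ) : γ * N (n + 2) = N (n - 1) + α * N n + β * N (n + 1) := by
    have h := hN (n - 1)
    rw [show n - 1 + 3 = n + 2 by ring, show n - 1 + 2 = n + 1 by ring, sub_add_cancel] at h
    rw [h]
    field_simp
    ring
  suffices h : ∀ n : ℤ, 0 ≤ n → x (n - 1) = N (n - 1) / N n ∧ x n = N n / N (n + 1) from
    fun n hn => (h n hn).2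
  refine Int.leInduction ⟨by simpa using hx_neg_one, by simpa using hx_zero⟩ ?_
  rintro n hn ⟨hprev, hcur⟩
  refine ⟨by simpa using hcur, ?_⟩
  rw [hx n hn, hprev, hcur, show n + 1 + 1 = n + 2 by ring]
  exact div_mul_div_add_add_eq_div hγ (hN_ne n hn) (hN_ne (n + 1) (by omega)) (hlin n)

end Linearization

theorem stmt_3 (α β γ : ℝ) (hγ : γ ≠ 0)
    (r s t : ℝ) (hr : r = β / γ) (hs : s = α / γ) (ht : t = 1 / γ)
    (V : ℤ → ℝ) (hV0 : V 0 = 0) (hV1 : V 1 = 1) (hV2 : V 2 = r)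
    (hV : ∀ n : ℤ, V (n + 3) = r * V (n + 2) + s * V (n + 1) + t * V n)
    (x : ℤ → ℝ)
    (hx : ∀ n : ℤ, 0 ≤ n → x (n + 1) = γ / (x n * (x (n - 1) + α) + β))
    (hden : ∀ n : ℤ, -1 ≤ n →
      t * V n * x (-1) * x 0 + (V (n + 2) - r * V (n + 1)) * x 0 + V (n + 1) ≠ 0) :
    ∀ n : ℤ, 0 ≤ n →
      x n = (t * V (n - 1) * x (-1) * x 0 + (V (n + 1) - r * V n) * x 0 + V n) /
        (t * V n * x (-1) * x 0 + (V (n + 2) - r * V (n + 1)) * x 0 + V (n + 1)) := by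
  set N : ℤ → ℝ := fun n => t * V (n - 1) * x (-1) * x 0 + (V (n + 1) - r * V n) * x 0 + V n
  have hVt : IsTribonacci r s t V := hV
  have ht0 : t ≠ 0 := by simpa [ht] using hγ
  have hNrec : IsTribonacci r s t N := fun n => by
    simp only [N]
    linear_combination hVt.shift_combination (t * x (-1) * x 0) (1 - r * x 0) (x 0) n
  have hN_ne (n : ℤ) (hn : 0 ≤ n) : N n ≠ 0 := by
    have h := hden (n - 1) (by omega)
    rwa [show n - 1 + 2 = n + 1 by ring, sub_add_cancel] at h
  have hVm1 := hVt.apply_neg_one ht0 hV0 hV1 hV2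
  have hVm2 := hVt.mul_apply_neg_two ht0 hV0 hV1 hV2
  have hN₀ : N 0 = x 0 := by simp [N, hVm1, hV0, hV1]
  have hx_neg_one : x (-1) = N (-1) / N 0 := by
    rw [hN₀, eq_div_iff (by simpa [hN₀] using hN_ne 0 le_rfl)]
    simp only [N, show (-1 : ℤ) - 1 = -2 by norm_num, show (-1 : ℤ) + 1 = 0 by norm_num, hV0, hVm1]
    linear_combination x (-1) * x 0 * hVm2.symm
  have hx_zero : x 0 = N 0 / N 1 := by simp [N, hN₀, hV0, hV1, hV2]
  subst hr hs ht
  intro n hn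
  simpa [N, add_assoc] using eq_div_of_isTribonacci hγ hx hNrec hN_ne hx_neg_one hx_zero n hn
end

section
/- Let φ, χ, ψ be pairwise distinct roots of x³ - r·x² - s·x - t = 0 with φ real and |χ| < |φ|, |ψ| < |φ|, and t ≠ 0. Then the generalized Tribonacci sequence satisfies lim_{n→∞} V_{n+1}/V_n = φ. -/
/-!
By Vieta and distinctness of the roots, `V n = A φ ^ n + B χ ^ n + C ψ ^ n` with
`A = φ / ((φ - χ) (φ - ψ)) ≠ 0`. Dominance of `φ` gives `V n / φ ^ n → A`, and the ratio of
consecutive terms is `φ` times a quotient of two sequences tending to `A`.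
-/

open Filter Topology

theorem vieta_of_factorization {K : Type*} [Field K] [CharZero K] {r s t a b c : K}
    (hfac : ∀ z : K, z ^ 3 - r * z ^ 2 - s * z - t = (z - a) * (z - b) * (z - c)) :
    r = a + b + c ∧ s = -(a * b + b * c + c * a) ∧ t = a * b * c := by
  refine ⟨?_, ?_, ?_⟩
  · linear_combination (-1 / 2 : K) * hfac 1 + (-1 / 2 : K) * hfac (-1) + hfac 0
  · linear_combination (-1 / 2 : K) * hfac 1 + (1 / 2 : K) * hfac (-1)
  · linear_combination -hfac 0

theorem tribonacci_eq_binet {K : Type*} [Field K] {a b c : K}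
    (hab : a ≠ b) (hac : a ≠ c) (hbc : b ≠ c) (W : ℕ → K)
    (h0 : W 0 = 0) (h1 : W 1 = 1) (h2 : W 2 = a + b + c)
    (hW : ∀ n, W (n + 3) =
      (a + b + c) * W (n + 2) - (a * b + b * c + c * a) * W (n + 1) + a * b * c * W n) :
    ∀ n, W n = a / ((a - b) * (a - c)) * a ^ n + b / ((b - a) * (b - c)) * b ^ n
      + c / ((c - a) * (c - b)) * c ^ n
  | 0 => by
    rw [h0]
    field_simp [sub_ne_zero.mpr hab, sub_ne_zero.mpr hac, sub_ne_zero.mpr hbc]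
    ring
  | 1 => by
    rw [h1]
    field_simp [sub_ne_zero.mpr hab, sub_ne_zero.mpr hac, sub_ne_zero.mpr hbc]
    ring
  | 2 => by
    rw [h2]
    field_simp [sub_ne_zero.mpr hab, sub_ne_zero.mpr hac, sub_ne_zero.mpr hbc]
    ring
  | n + 3 => by
    rw [hW, tribonacci_eq_binet hab hac hbc W h0 h1 h2 hW n,
      tribonacci_eq_binet hab hac hbc W h0 h1 h2 hW (n + 1),
      tribonacci_eq_binet hab hac hbc W h0 h1 h2 hW (n + 2)]
    ring

section DominantRoot

variable {𝕜 : Type*} [NormedField 𝕜]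

theorem tendsto_div_pow_of_norm_lt {a b c : 𝕜} (A B C : 𝕜) (hb : ‖b‖ < ‖a‖) (hc : ‖c‖ < ‖a‖) :
    Tendsto (fun n : ℕ => (A * a ^ n + B * b ^ n + C * c ^ n) / a ^ n) atTop (𝓝 A) := by
  have ha : a ≠ 0 := norm_pos_iff.mp ((norm_nonneg b).trans_lt hb)
  have hba : Tendsto (fun n : ℕ => (b / a) ^ n) atTop (𝓝 0) :=
    tendsto_pow_atTop_nhds_zero_of_norm_lt_one (by rwa [norm_div, div_lt_one (by positivity)])
  have hca : Tendsto (fun n : ℕ => (c / a) ^ n) atTop (𝓝 0) :=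
    tendsto_pow_atTop_nhds_zero_of_norm_lt_one (by rwa [norm_div, div_lt_one (by positivity)])
  have hsum := (tendsto_const_nhds (x := A)).add ((hba.const_mul B).add (hca.const_mul C))
  simp only [mul_zero, add_zero] at hsum
  refine hsum.congr fun n => ?_
  simp only [div_pow]
  field_simp
  ring

theorem tendsto_succ_div_of_tendsto_div_pow {u : ℕ → 𝕜} {a A : 𝕜} (ha : a ≠ 0) (hA : A ≠ 0)
    (h : Tendsto (fun n => u n / a ^ n) atTop (𝓝 A)) :
    Tendsto (fun n => u (n + 1) / u n) atTop (𝓝 a) := by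
  have hlim := ((h.comp (tendsto_add_atTop_nat 1)).const_mul a).div h hA
  rw [mul_div_cancel_right₀ a hA] at hlim
  -- no `u n ≠ 0` is needed: where `u n = 0` both sides are `0`
  refine hlim.congr fun n => ?_
  simp only [Pi.div_apply, Function.comp_apply, pow_succ]
  field_simp

end DominantRoot

theorem stmt_5_general (r s t : ℝ) (φ : ℝ) (χ ψ : ℂ)
    (hfac : ∀ z : ℂ, z ^ 3 - (r : ℂ) * z ^ 2 - (s : ℂ) * z - (t : ℂ) =
      (z - (φ : ℂ)) * (z - χ) * (z - ψ))
    (hφχ : (φ : ℂ) ≠ χ) (hφψ : (φ : ℂ) ≠ ψ) (hχψ : χ ≠ ψ)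
    (hχ : ‖χ‖ < |φ|) (hψ : ‖ψ‖ < |φ|)
    (V : ℕ → ℝ) (hV0 : V 0 = 0) (hV1 : V 1 = 1) (hV2 : V 2 = r)
    (hV : ∀ n : ℕ, V (n + 3) = r * V (n + 2) + s * V (n + 1) + t * V n) :
    Filter.Tendsto (fun n : ℕ => V (n + 1) / V n) Filter.atTop (nhds φ) := by
  rw [← Real.norm_eq_abs, ← Complex.norm_real] at hχ hψ
  have hφ : (φ : ℂ) ≠ 0 := norm_pos_iff.mp ((norm_nonneg χ).trans_lt hχ)
  obtain ⟨hr, hs, ht⟩ := vieta_of_factorization hfac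
  have binet := tribonacci_eq_binet hφχ hφψ hχψ (fun n => (V n : ℂ))
    (by simp [hV0]) (by simp [hV1]) (by simp [hV2, hr])
    (fun n => by push_cast [hV, hr, hs, ht]; ring)
  have hA : (φ : ℂ) / ((φ - χ) * (φ - ψ)) ≠ 0 :=
    div_ne_zero hφ (mul_ne_zero (sub_ne_zero.mpr hφχ) (sub_ne_zero.mpr hφψ))
  have hdiv : Tendsto (fun n => (V n : ℂ) / φ ^ n) atTop
      (𝓝 ((φ : ℂ) / ((φ - χ) * (φ - ψ)))) := by
    simp_rw [binet]
    exact tendsto_div_pow_of_norm_lt _ _ _ hχ hψ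
  have hlim := tendsto_succ_div_of_tendsto_div_pow hφ hA hdiv
  rw [Complex.isometry_ofReal.isUniformInducing.isInducing.tendsto_nhds_iff]
  simpa only [Function.comp_def, Complex.ofReal_div] using hlim

theorem stmt_5 (r s t : ℝ) (ht : t ≠ 0) (φ : ℝ) (χ ψ : ℂ)
    (hfac : ∀ z : ℂ, z ^ 3 - (r : ℂ) * z ^ 2 - (s : ℂ) * z - (t : ℂ) =
      (z - (φ : ℂ)) * (z - χ) * (z - ψ))
    (hφχ : (φ : ℂ) ≠ χ) (hφψ : (φ : ℂ) ≠ ψ) (hχψ : χ ≠ ψ)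
    (hχ : ‖χ‖ < |φ|) (hψ : ‖ψ‖ < |φ|)
    (V : ℕ → ℝ) (hV0 : V 0 = 0) (hV1 : V 1 = 1) (hV2 : V 2 = r)
    (hV : ∀ n : ℕ, V (n + 3) = r * V (n + 2) + s * V (n + 1) + t * V n) :
    Filter.Tendsto (fun n : ℕ => V (n + 1) / V n) Filter.atTop (nhds φ) :=
  stmt_5_general r s t φ χ ψ hfac hφχ hφψ hχψ hχ hψ V hV0 hV1 hV2 hV
end

section
/- Let (T_n) be the Tribonacci sequence with T_0 = 0, T_1 = 1, T_2 = 1 and T_{n+3} = T_{n+2} + T_{n+1} + T_n. If (x_n)_{n ≥ -1} satisfies x_{n+1} = 1/(x_n(x_{n-1}+1)+1) with all denominators in the formula below nonzero, then x_n = (T_{n-1}·x_{-1}·x_0 + (T_{n+1} - T_n)·x_0 + T_n) / (T_n·x_{-1}·x_0 + (T_n + T_{n-1})·x_0 + T_{n+1}) for all n ≥ 0. -/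
theorem stmt_6 (T : ℤ → ℝ) (hT0 : T 0 = 0) (hT1 : T 1 = 1) (hT2 : T 2 = 1)
    (hT : ∀ n : ℤ, T (n + 3) = T (n + 2) + T (n + 1) + T n)
    (x : ℤ → ℝ)
    (hx : ∀ n : ℤ, 0 ≤ n → x (n + 1) = 1 / (x n * (x (n - 1) + 1) + 1))
    (hden : ∀ n : ℤ, -1 ≤ n →
      T n * x (-1) * x 0 + (T n + T (n - 1)) * x 0 + T (n + 1) ≠ 0) :
    ∀ n : ℤ, 0 ≤ n →
      x n = (T (n - 1) * x (-1) * x 0 + (T (n + 1) - T n) * x 0 + T n) /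
        (T n * x (-1) * x 0 + (T n + T (n - 1)) * x 0 + T (n + 1)) := by
  -- negative-index values of T
  have hTm1 : T (-1) = 0 := by
    have h := hT (-1)
    norm_num at h
    linarith
  have hTm2 : T (-2) = 1 := by
    have h := hT (-2)
    norm_num at h
    linarith
  set D : ℤ → ℝ := fun n => T n * x (-1) * x 0 + (T n + T (n - 1)) * x 0 + T (n + 1)
    with hD
  clear_value D
  have hD' : ∀ n : ℤ, -1 ≤ n → D n ≠ 0 := by
    intro n hn
    simpa [hD] using hden n hn
  -- recurrence for T with shifted indices
  have hTrec : ∀ n : ℤ, T (n + 1) = T n + T (n - 1) + T (n - 2) := by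
    intro n
    have e := hT (n - 2)
    rw [show n - 2 + 3 = n + 1 by ring, show n - 2 + 2 = n by ring,
      show n - 2 + 1 = n - 1 by ring] at e
    exact e
  -- recurrence for D
  have hDrec : ∀ n : ℤ, D (n + 2) = D (n + 1) + D n + D (n - 1) := by
    intro n
    have e1 := hTrec (n + 1)
    have e2 := hT n
    have e3 := hTrec n
    rw [show n + 1 - 1 = n by ring, show n + 1 - 2 = n - 1 by ring,
      show n + 1 + 1 = n + 2 by ring] at e1
    simp only [hD]
    rw [show n + 2 - 1 = n + 1 by ring, show n + 1 - 1 = n by ring,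
      show n + 1 + 1 = n + 2 by ring, show n - 1 - 1 = n - 2 by ring,
      show n - 1 + 1 = n by ring, show n + 2 + 1 = n + 3 by ring]
    linear_combination (x (-1) * x 0 + x 0) * e1 + x 0 * e3 + e2
  have key : ∀ n : ℤ, 0 ≤ n → x n = D (n - 1) / D n ∧ x (n + 1) = D n / D (n + 1) := by
    refine Int.le_induction ?_ ?_
    ·
      have hDm1 : D (-1) = x 0 := by
        simp only [hD]
        norm_num [hTm1, hTm2, hT0]
      have hD0 : D 0 = 1 := by
        simp only [hD]
        norm_num [hTm1, hT0, hT1]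
      have hD1 : D 1 = x (-1) * x 0 + x 0 + 1 := by
        simp only [hD]
        norm_num [hT0, hT1, hT2]
      constructor
      · rw [show (0:ℤ) - 1 = -1 by ring, hDm1, hD0, div_one]
      · have h1 := hx 0 le_rfl
        norm_num at h1
        rw [show (0:ℤ) + 1 = 1 by ring, h1, hD0, hD1]
        ring
    · intro n hn ih
      obtain ⟨ih1, ih2⟩ := ih
      constructor
      · rw [show n + 1 - 1 = n by ring]
        exact ih2
      · have h1 := hx (n + 1) (by linarith)
        rw [show n + 1 - 1 = n by ring] at h1
        rw [h1, ih1, ih2]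
        have hn0 : D n ≠ 0 := hD' n (by linarith)
        have hn1 : D (n + 1) ≠ 0 := hD' (n + 1) (by linarith)
        have hn2 : D (n + 1 + 1) ≠ 0 := hD' (n + 1 + 1) (by linarith)
        have hr := hDrec n
        rw [show n + 2 = n + 1 + 1 by ring] at hr
        rw [hr]
        have hsum : D (n + 1) + D n + D (n - 1) ≠ 0 := by rw [← hr]; exact hn2
        have hE : D n / D (n + 1) * (D (n - 1) / D n + 1) + 1
            = (D (n + 1) + D n + D (n - 1)) / D (n + 1) := by
          field_simp
          ring
        rw [hE, one_div_div]
  intro n hn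
  obtain ⟨h1, -⟩ := key n hn
  rw [h1]
  simp only [hD]
  congr 1
  rw [show n - 1 - 1 = n - 2 by ring, show n - 1 + 1 = n by ring]
  have e := hTrec n
  linear_combination (-(x 0)) * e
end

section
/- Let (N_n) be the Narayana sequence satisfying N_{n+3} = N_{n+2} + N_n. If (x_n)_{n ≥ -1} satisfies the difference equation with r = 1, s = 0, t = 1 (i.e., β = γ, α = 0, after normalizing γ = 1: x_{n+1} = 1/(x_n·x_{n-1} + 1)), then x_n = (N_{n-1}·x_{-1}·x_0 + N_{n-2}·x_0 + N_n) / (N_n·x_{-1}·x_0 + N_{n-1}·x_0 + N_{n+1}) for all n ≥ 0, with all denominators nonzero. -/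
theorem stmt_8 (N : ℤ → ℝ) (hN0 : N 0 = 0) (hN1 : N 1 = 1) (hN2 : N 2 = 1)
    (hN : ∀ n : ℤ, N (n + 3) = N (n + 2) + N n)
    (x : ℤ → ℝ)
    (hx : ∀ n : ℤ, 0 ≤ n → x (n + 1) = 1 / (x n * x (n - 1) + 1))
    (hden : ∀ n : ℤ, -1 ≤ n →
      N n * x (-1) * x 0 + N (n - 1) * x 0 + N (n + 1) ≠ 0) :
    ∀ n : ℤ, 0 ≤ n →
      x n = (N (n - 1) * x (-1) * x 0 + N (n - 2) * x 0 + N n) /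
        (N n * x (-1) * x 0 + N (n - 1) * x 0 + N (n + 1)) := by
  set D : ℤ → ℝ := fun n => N n * x (-1) * x 0 + N (n - 1) * x 0 + N (n + 1) with hD
  have hNm1 : N (-1) = 0 := by have h := hN (-1); norm_num at h; linarith
  have hNm2 : N (-2) = 1 := by have h := hN (-2); norm_num at h; linarith
  have hNm3 : N (-3) = 0 := by have h := hN (-3); norm_num at h; linarith
  have hrec : ∀ n : ℤ, D (n + 1) = D n + D (n - 2) := by
    intro n
    have h1 : N (n + 1) = N n + N (n - 2) := by
      have h := hN (n - 2)
      rw [show n - 2 + 3 = n + 1 by ring, show n - 2 + 2 = n by ring] at h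
      exact h
    have h2 : N n = N (n - 1) + N (n - 3) := by
      have h := hN (n - 3)
      rw [show n - 3 + 3 = n by ring, show n - 3 + 2 = n - 1 by ring] at h
      exact h
    have h3 : N (n + 2) = N (n + 1) + N (n - 1) := by
      have h := hN (n - 1)
      rw [show n - 1 + 3 = n + 2 by ring, show n - 1 + 2 = n + 1 by ring] at h
      exact h
    simp only [hD]
    rw [show n + 1 - 1 = n by ring, show n + 1 + 1 = n + 2 by ring,
        show n - 2 - 1 = n - 3 by ring, show n - 2 + 1 = n - 1 by ring]
    rw [h3, h1, h2]; ring
  have key : ∀ k : ℕ,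
      x ((k : ℤ) - 1) = D ((k : ℤ) - 2) / D ((k : ℤ) - 1) ∧
      x (k : ℤ) = D ((k : ℤ) - 1) / D (k : ℤ) := by
    intro k
    induction k with
    | zero =>
      have hDm1 : D (-1) = x 0 := by
        simp only [hD]; norm_num [hNm1, hNm2, hN0]
      have hDm2 : D (-2) = x (-1) * x 0 := by
        simp only [hD]; norm_num [hNm2, hNm3, hNm1]
      have hD0 : D 0 = 1 := by
        simp only [hD]; norm_num [hN0, hNm1, hN1]
      have hx0 : x 0 ≠ 0 := by
        have := hden (-1) (by norm_num)
        simpa [hD, hNm1, hNm2, hN0] using this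
      constructor
      · push_cast
        rw [hDm1, hDm2]
        field_simp
      · push_cast
        rw [hDm1, hD0]
        simp
    | succ k ih =>
      obtain ⟨ih1, ih2⟩ := ih
      have hk : (0 : ℤ) ≤ (k : ℤ) := by positivity
      have hD1 : D ((k : ℤ) - 1) ≠ 0 := hden _ (by omega)
      have hD2 : D (k : ℤ) ≠ 0 := hden _ (by omega)
      have hmul : x (k : ℤ) * x ((k : ℤ) - 1) + 1 = D ((k : ℤ) + 1) / D (k : ℤ) := by
        rw [ih1, ih2, hrec]
        field_simp
        ring
      have hx1 : x ((k : ℤ) + 1) = D (k : ℤ) / D ((k : ℤ) + 1) := by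
        rw [hx (k : ℤ) hk, hmul, one_div_div]
      constructor
      · push_cast
        rw [show (k : ℤ) + 1 - 1 = (k : ℤ) by ring,
            show (k : ℤ) + 1 - 2 = (k : ℤ) - 1 by ring]
        exact ih2
      · push_cast
        rw [show (k : ℤ) + 1 - 1 = (k : ℤ) by ring]
        exact hx1
  intro n hn
  obtain ⟨k, rfl⟩ := Int.eq_ofNat_of_zero_le hn
  have h := (key k).2
  have harg : D ((k : ℤ) - 1) = N ((k : ℤ) - 1) * x (-1) * x 0 + N ((k : ℤ) - 2) * x 0 + N (k : ℤ) := by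
    simp only [hD]
    rw [show (k : ℤ) - 1 - 1 = (k : ℤ) - 2 by ring, show (k : ℤ) - 1 + 1 = (k : ℤ) by ring]
  rw [harg] at h
  exact h
end

section
/- Let (J_n) be the third-order Jacobsthal sequence satisfying J_{n+3} = J_{n+2} + J_{n+1} + 2·J_n. If (x_n)_{n ≥ -1} satisfies the difference equation corresponding to r = s = 1, t = 2 (i.e., x_{n+1} = (1/2)/(x_n(x_{n-1} + 1/2) + 1/2), with γ = 1/2, α = β = 1/2), then x_n = (2·J_{n-1}·x_{-1}·x_0 + (J_{n+1} - J_n)·x_0 + J_n) / (2·J_n·x_{-1}·x_0 + (J_{n+2} - J_{n+1})·x_0 + J_{n+1}) for all n ≥ 0, with all denominators nonzero. -/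
set_option maxRecDepth 4000

theorem stmt_9 (J : ℤ → ℝ) (hJ0 : J 0 = 0) (hJ1 : J 1 = 1) (hJ2 : J 2 = 1)
    (hJ : ∀ n : ℤ, J (n + 3) = J (n + 2) + J (n + 1) + 2 * J n)
    (x : ℤ → ℝ)
    (hx : ∀ n : ℤ, 0 ≤ n →
      x (n + 1) = (1 / 2) / (x n * (x (n - 1) + 1 / 2) + 1 / 2))
    (hden : ∀ n : ℤ, -1 ≤ n →
      2 * J n * x (-1) * x 0 + (J (n + 2) - J (n + 1)) * x 0 + J (n + 1) ≠ 0) :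
    ∀ n : ℤ, 0 ≤ n →
      x n = (2 * J (n - 1) * x (-1) * x 0 + (J (n + 1) - J n) * x 0 + J n) /
        (2 * J n * x (-1) * x 0 + (J (n + 2) - J (n + 1)) * x 0 + J (n + 1)) := by
  obtain ⟨D, hD⟩ : ∃ D : ℤ → ℝ, ∀ k : ℤ,
      D k = 2 * J k * x (-1) * x 0 + (J (k + 2) - J (k + 1)) * x 0 + J (k + 1) :=
    ⟨_, fun k => rfl⟩
  have hJm1 : J (-1) = 0 := by
    have h := hJ (-1); norm_num at h; linarith
  have hJm2 : J (-2) = 1 / 2 := by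
    have h := hJ (-2); norm_num at h; linarith
  have hDne : ∀ k : ℤ, -1 ≤ k → D k ≠ 0 := by
    intro k hk; rw [hD]; exact hden k hk
  have hrec : ∀ k : ℤ, D (k + 1) = D k + D (k - 1) + 2 * D (k - 2) := by
    intro k
    have h1 := hJ (k - 2)
    have h2 := hJ (k - 1)
    have h3 := hJ k
    have e2 : k - 2 + 2 = k := by ring
    have e3 : k - 2 + 1 = k - 1 := by ring
    have e5 : k - 1 + 2 = k + 1 := by ring
    have e6 : k - 1 + 1 = k := by ring
    rw [show k - 2 + 3 = k + 1 from by ring, e2, e3] at h1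
    rw [show k - 1 + 3 = k + 2 from by ring, e5, e6] at h2
    rw [hD (k + 1), hD k, hD (k - 1), hD (k - 2),
      show k + 1 + 2 = k + 3 from by ring, show k + 1 + 1 = k + 2 from by ring,
      e5, e6, e2, e3]
    linear_combination 2 * x (-1) * x 0 * h1 + x 0 * (h3 - h2) + h2
  have hbne : x 0 ≠ 0 := by
    have h := hden (-1) (by norm_num)
    norm_num [hJm1, hJ0, hJ1] at h
    exact h
  have hDm1 : D (-1) = x 0 := by rw [hD]; norm_num [hJm1, hJ0, hJ1]
  have hDm2 : D (-2) = x (-1) * x 0 := by rw [hD]; norm_num [hJm2, hJm1, hJ0]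
  have hD0 : D 0 = 1 := by rw [hD]; norm_num [hJ0, hJ1, hJ2]
  have key : ∀ n : ℤ, 0 ≤ n → x (n - 1) = D (n - 2) / D (n - 1) ∧ x n = D (n - 1) / D n := by
    refine Int.le_induction ?_ ?_
    · constructor
      · show x (0 - 1) = D (0 - 2) / D (0 - 1)
        norm_num [hDm2, hDm1]
        rw [mul_div_assoc, div_self hbne, mul_one]
      · show x 0 = D (0 - 1) / D 0
        norm_num [hDm1, hD0]
    · intro n hn ih
      obtain ⟨ih1, ih2⟩ := ih
      have hDn := hDne n (by linarith)
      have hDn1 := hDne (n + 1) (by linarith)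
      have hDnm1 := hDne (n - 1) (by linarith)
      have hr := hrec n
      refine ⟨?_, ?_⟩
      · simp only [show n + 1 - 1 = n from by ring, show n + 1 - 2 = n - 1 from by ring]
        exact ih2
      · simp only [show n + 1 - 1 = n from by ring]
        rw [hx n hn, ih2, ih1]
        have hxd : D (n - 1) / D n * (D (n - 2) / D (n - 1) + 1 / 2) + 1 / 2
            = D (n + 1) / (2 * D n) := by
          rw [hr]
          field_simp
          ring
        rw [hxd]
        field_simp
  intro n hn
  have h := (key n hn).2
  rw [h, hD (n - 1), hD n,
    show n - 1 + 2 = n + 1 from by ring, show n - 1 + 1 = n from by ring]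
end

section
/- If q_0, q_1, ..., q_k are real numbers with |q_0| + |q_1| + ... + |q_k| < 1, then every (complex) root of λ^{k+1} - q_0·λ^k - q_1·λ^{k-1} - ... - q_k = 0 satisfies |λ| < 1. -/
open Finset

theorem norm_lt_one_of_pow_eq_sum {R : Type*} [SeminormedRing R] [NormOneClass R] [NormMulClass R]
    {k : ℕ} {c : ℕ → R} (hc : ∑ i ∈ range (k + 1), ‖c i‖ < 1) {z : R}
    (hz : z ^ (k + 1) = ∑ i ∈ range (k + 1), c i * z ^ (k - i)) : ‖z‖ < 1 := by
  by_contra! hz_one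
  have hpow_pos : 0 < ‖z‖ ^ k := pow_pos (one_pos.trans_le hz_one) k
  have hbound : ‖z‖ ^ (k + 1) ≤ (∑ i ∈ range (k + 1), ‖c i‖) * ‖z‖ ^ k :=
    calc ‖z‖ ^ (k + 1) = ‖∑ i ∈ range (k + 1), c i * z ^ (k - i)‖ := by rw [← hz, norm_pow]
      _ ≤ ∑ i ∈ range (k + 1), ‖c i‖ * ‖z‖ ^ (k - i) := by
          refine (norm_sum_le _ _).trans (sum_le_sum fun i _ => ?_)
          rw [norm_mul, norm_pow]
      _ ≤ ∑ i ∈ range (k + 1), ‖c i‖ * ‖z‖ ^ k := by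
          gcongr with i
          exact Nat.sub_le k i
      _ = (∑ i ∈ range (k + 1), ‖c i‖) * ‖z‖ ^ k := (sum_mul ..).symm
  have hdecrease : ‖z‖ ^ (k + 1) < ‖z‖ ^ k :=
    hbound.trans_lt (mul_lt_of_lt_one_left hpow_pos hc)
  exact (pow_le_pow_right₀ hz_one k.le_succ).not_gt hdecrease

theorem stmt_14 (k : ℕ) (q : ℕ → ℝ)
    (hq : ∑ i ∈ Finset.range (k + 1), |q i| < 1) :
    ∀ lam : ℂ,
      lam ^ (k + 1) - ∑ i ∈ Finset.range (k + 1), (q i : ℂ) * lam ^ (k - i) = 0 →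
      ‖lam‖ < 1 := by
  intro lam hroot
  refine norm_lt_one_of_pow_eq_sum (c := fun i => (q i : ℂ)) ?_ (sub_eq_zero.mp hroot)
  simpa only [Complex.norm_real, Real.norm_eq_abs] using hq
end

section
/- Let (T_n) be the Tribonacci sequence (T_0 = 0, T_1 = T_2 = 1, T_{n+3} = T_{n+2}+T_{n+1}+T_n) and φ ≈ 1.839 its dominant root. Every solution of x_{n+1} = 1/(x_n(x_{n-1}+1)+1) with initial values outside the forbidden set converges to 1/φ, the unique real root of μ³ + μ² + μ = 1. -/
/-!
Writing `w n = T n x₋₁ x₀ + (T n + T (n-1)) x₀ + T (n+1)`, the sequence `w` satisfies the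
Tribonacci recurrence and `x n = w (n-1) / w n`; the forbidden set is exactly where some `w n`
vanishes. So it suffices that consecutive ratios of a Tribonacci-type sequence tend to `1/φ`.
For such a sequence `v`, the deviation `v (m+1) - φ v m` satisfies a two-term recurrence whose
characteristic roots are the complex pair of modulus `φ^(-1/2)`, hence stays bounded; therefore
`v m / φ^m` is Cauchy. Its limit is nonzero because `v m + (φ²-φ) v (m+1) + φ v (m+2)` is exactly
`φ^m` times its initial value, which is the nondegeneracy condition.
-/

open Filter Topology

section TwoTermRecurrence

variable {p q : ℝ} {s : ℕ → ℝ}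

/-- The quadratic form `Q` below is positive definite since `p² < 4q`, and is multiplied by
`q ≤ 1` at each step. -/
theorem exists_abs_le_of_two_term_recurrence (hq : q ≤ 1) (hdisc : p ^ 2 < 4 * q)
    (hs : ∀ m, s (m + 2) = p * s (m + 1) - q * s m) : ∃ B, ∀ m, |s m| ≤ B := by
  set Q : ℕ → ℝ := fun m => s (m + 1) ^ 2 - p * s m * s (m + 1) + q * s m ^ 2
  have hδ : 0 < q - p ^ 2 / 4 := by linarith
  have hQ_succ : ∀ m, Q (m + 1) = q * Q m := fun m => by
    simp only [Q, hs]; ring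
  have hQ_ge : ∀ m, (q - p ^ 2 / 4) * s m ^ 2 ≤ Q m := fun m => by
    simp only [Q]; nlinarith [sq_nonneg (s (m + 1) - p * s m / 2)]
  have hQ_nonneg : ∀ m, 0 ≤ Q m := fun m => (mul_nonneg hδ.le (sq_nonneg _)).trans (hQ_ge m)
  have hQ_le : ∀ m, Q m ≤ Q 0 := by
    intro m
    induction m with
    | zero => rfl
    | succ m ih => rw [hQ_succ]; nlinarith [hQ_nonneg m]
  refine ⟨√(Q 0 / (q - p ^ 2 / 4)), fun m => Real.abs_le_sqrt ?_⟩
  rw [le_div_iff₀ hδ]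
  linarith [hQ_ge m, hQ_le m]

end TwoTermRecurrence

section TribonacciRoot

variable {φ : ℝ}

theorem one_lt_of_tribonacci_root (hφ : φ ^ 3 = φ ^ 2 + φ + 1) : 1 < φ := by
  nlinarith [sq_nonneg (φ + 1 / 3), sq_nonneg (φ - 1)]

theorem lt_two_of_tribonacci_root (hφ : φ ^ 3 = φ ^ 2 + φ + 1) : φ < 2 := by
  nlinarith [sq_nonneg (φ + 1 / 3), sq_nonneg (φ - 2)]

end TribonacciRoot

section TribonacciRecurrence

variable {φ : ℝ} {v : ℕ → ℝ}

theorem tribonacci_weighted_sum_eq (hφ : φ ^ 3 = φ ^ 2 + φ + 1)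
    (hv : ∀ n, v (n + 3) = v (n + 2) + v (n + 1) + v n) (m : ℕ) :
    v m + (φ ^ 2 - φ) * v (m + 1) + φ * v (m + 2) =
      φ ^ m * (v 0 + (φ ^ 2 - φ) * v 1 + φ * v 2) := by
  induction m with
  | zero => simp
  | succ m ih =>
    rw [hv m, pow_succ]
    linear_combination φ * ih - v (m + 1) * hφ

theorem exists_abs_sub_mul_le_of_tribonacci (hφ : φ ^ 3 = φ ^ 2 + φ + 1)
    (hv : ∀ n, v (n + 3) = v (n + 2) + v (n + 1) + v n) :
    ∃ B, ∀ m, |v (m + 1) - φ * v m| ≤ B := by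
  have h1 := one_lt_of_tribonacci_root hφ
  have h2 := lt_two_of_tribonacci_root hφ
  have hφ0 : φ ≠ 0 := by positivity
  refine exists_abs_le_of_two_term_recurrence (p := 1 - φ) (q := 1 / φ) ?_ ?_ fun m => ?_
  · rw [div_le_one (by positivity)]; exact h1.le
  · rw [mul_one_div, lt_div_iff₀ (by positivity)]; nlinarith
  · rw [show m + 2 + 1 = m + 3 by ring, hv m]
    field_simp
    linear_combination (-v (m + 1)) * hφ

theorem cauchySeq_div_pow_of_tribonacci (hφ : φ ^ 3 = φ ^ 2 + φ + 1)
    (hv : ∀ n, v (n + 3) = v (n + 2) + v (n + 1) + v n) :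
    CauchySeq fun m => v m / φ ^ m := by
  obtain ⟨B, hB⟩ := exists_abs_sub_mul_le_of_tribonacci hφ hv
  have h1 := one_lt_of_tribonacci_root hφ
  refine cauchySeq_of_le_geometric (1 / φ) (B / φ) ((div_lt_one (by positivity)).2 h1)
    fun m => ?_
  have hpow : 0 < φ ^ (m + 1) := by positivity
  calc dist (v m / φ ^ m) (v (m + 1) / φ ^ (m + 1))
      = |v (m + 1) - φ * v m| / φ ^ (m + 1) := by
        rw [Real.dist_eq, abs_sub_comm, ← abs_of_pos hpow, ← abs_div, abs_of_pos hpow]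
        congr 1
        field_simp
        ring
    _ ≤ B / φ ^ (m + 1) := by gcongr; exact hB m
    _ = B / φ * (1 / φ) ^ m := by rw [one_div_pow, pow_succ']; field_simp

theorem exists_tendsto_div_pow_of_tribonacci (hφ : φ ^ 3 = φ ^ 2 + φ + 1)
    (hv : ∀ n, v (n + 3) = v (n + 2) + v (n + 1) + v n)
    (hnd : v 0 + (φ ^ 2 - φ) * v 1 + φ * v 2 ≠ 0) :
    ∃ A ≠ 0, Tendsto (fun m => v m / φ ^ m) atTop (𝓝 A) := by
  obtain ⟨A, hA⟩ := cauchySeq_tendsto_of_complete (cauchySeq_div_pow_of_tribonacci hφ hv)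
  refine ⟨A, fun hA0 => hnd ?_, hA⟩
  have hφ0 : φ ≠ 0 := (zero_lt_one.trans (one_lt_of_tribonacci_root hφ)).ne'
  have hconst : ∀ m, v m / φ ^ m + (φ ^ 3 - φ ^ 2) * (v (m + 1) / φ ^ (m + 1)) +
      φ ^ 3 * (v (m + 2) / φ ^ (m + 2)) = v 0 + (φ ^ 2 - φ) * v 1 + φ * v 2 := fun m => by
    rw [← mul_div_cancel_left₀ (v 0 + (φ ^ 2 - φ) * v 1 + φ * v 2) (pow_ne_zero m hφ0),
      ← tribonacci_weighted_sum_eq hφ hv m]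
    field_simp
    ring
  have hlim := (hA.add ((hA.comp (tendsto_add_atTop_nat 1)).const_mul (φ ^ 3 - φ ^ 2))).add
    ((hA.comp (tendsto_add_atTop_nat 2)).const_mul (φ ^ 3))
  simp only [Function.comp_def, hconst, hA0, mul_zero, add_zero] at hlim
  exact tendsto_nhds_unique tendsto_const_nhds hlim

theorem tendsto_div_succ_of_tribonacci (hφ : φ ^ 3 = φ ^ 2 + φ + 1)
    (hv : ∀ n, v (n + 3) = v (n + 2) + v (n + 1) + v n)
    (hnd : v 0 + (φ ^ 2 - φ) * v 1 + φ * v 2 ≠ 0) :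
    Tendsto (fun m => v m / v (m + 1)) atTop (𝓝 (1 / φ)) := by
  obtain ⟨A, hA0, hA⟩ := exists_tendsto_div_pow_of_tribonacci hφ hv hnd
  have hφ0 : φ ≠ 0 := (zero_lt_one.trans (one_lt_of_tribonacci_root hφ)).ne'
  have hlim := hA.div ((hA.comp (tendsto_add_atTop_nat 1)).const_mul φ) (mul_ne_zero hφ0 hA0)
  rw [show A / (φ * A) = 1 / φ by field_simp] at hlim
  refine hlim.congr fun m => ?_
  simp only [Pi.div_apply, Function.comp_apply, pow_succ]
  rcases eq_or_ne (v (m + 1)) 0 with h | h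
  · simp [h]
  · field_simp

end TribonacciRecurrence

theorem eq_div_of_tribonacci_of_ne_zero {x w : ℤ → ℝ}
    (hw : ∀ n, w (n + 3) = w (n + 2) + w (n + 1) + w n) (hw0 : ∀ n, -1 ≤ n → w n ≠ 0)
    (hx : ∀ n : ℤ, 0 ≤ n → x (n + 1) = 1 / (x n * (x (n - 1) + 1) + 1))
    (hx_neg_one : x (-1) = w (-2) / w (-1)) (hx_zero : x 0 = w (-1) / w 0) :
    ∀ n, 0 ≤ n → x n = w (n - 1) / w n := by
  suffices h : ∀ n, 0 ≤ n → x (n - 1) = w (n - 2) / w (n - 1) ∧ x n = w (n - 1) / w n from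
    fun n hn => (h n hn).2
  refine Int.leInduction ⟨hx_neg_one, hx_zero⟩ fun n hn ⟨ih_pred, ih⟩ =>
    ⟨by rwa [add_sub_cancel_right, show n + 1 - 2 = n - 1 by ring], ?_⟩
  have hwn := hw0 n (by omega)
  have hwn' := hw0 (n - 1) (by omega)
  have hsucc : w (n + 1) = w n + w (n - 1) + w (n - 2) := by
    simpa [show n - 2 + 3 = n + 1 by ring, show n - 2 + 2 = n by ring,
      show n - 2 + 1 = n - 1 by ring] using hw (n - 2)
  rw [add_sub_cancel_right, hx n hn, ih, ih_pred, hsucc]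
  field_simp
  ring

theorem tendsto_div_of_tribonacci_int {φ : ℝ} {w : ℤ → ℝ} (hφ : φ ^ 3 = φ ^ 2 + φ + 1)
    (hw : ∀ n, w (n + 3) = w (n + 2) + w (n + 1) + w n)
    (hnd : w (-2) + (φ ^ 2 - φ) * w (-1) + φ * w 0 ≠ 0) :
    Tendsto (fun n : ℕ => w (n - 1) / w n) atTop (𝓝 (1 / φ)) := by
  set v : ℕ → ℝ := fun k => w (k - 2)
  have hv : ∀ k, v (k + 3) = v (k + 2) + v (k + 1) + v k := fun k => by
    simp only [v]
    push_cast
    rw [show (k : ℤ) + 3 - 2 = k - 2 + 3 by ring, show (k : ℤ) + 2 - 2 = k - 2 + 2 by ring,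
      show (k : ℤ) + 1 - 2 = k - 2 + 1 by ring]
    exact hw _
  refine ((tendsto_div_succ_of_tribonacci hφ hv (by simpa [v] using hnd)).comp
    (tendsto_add_atTop_nat 1)).congr fun n => ?_
  simp only [Function.comp_apply, v]
  congr 2 <;> push_cast <;> ring

theorem tribonacci_neg_one_two_three {T : ℤ → ℝ} (hT0 : T 0 = 0) (hT1 : T 1 = 1) (hT2 : T 2 = 1)
    (hT : ∀ n : ℤ, T (n + 3) = T (n + 2) + T (n + 1) + T n) :
    T (-1) = 0 ∧ T (-2) = 1 ∧ T (-3) = -1 := by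
  have h1 := hT (-1)
  have h2 := hT (-2)
  have h3 := hT (-3)
  norm_num at h1 h2 h3
  refine ⟨?_, ?_, ?_⟩ <;> linarith

theorem stmt_18 (T : ℤ → ℝ) (hT0 : T 0 = 0) (hT1 : T 1 = 1) (hT2 : T 2 = 1)
    (hT : ∀ n : ℤ, T (n + 3) = T (n + 2) + T (n + 1) + T n)
    (φ : ℝ) (hφ : φ ^ 3 = φ ^ 2 + φ + 1)
    (x : ℤ → ℝ)
    (hx : ∀ n : ℤ, 0 ≤ n → x (n + 1) = 1 / (x n * (x (n - 1) + 1) + 1))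
    (hforb : ∀ n : ℤ, -1 ≤ n →
      T n * x (-1) * x 0 + (T n + T (n - 1)) * x 0 + T (n + 1) ≠ 0)
    (hnd : x (-1) * x 0 + (φ ^ 2 - φ) * x 0 + φ ≠ 0) :
    Filter.Tendsto (fun n : ℕ => x (n : ℤ)) Filter.atTop (nhds (1 / φ)) ∧
      (1 / φ) ^ 3 + (1 / φ) ^ 2 + (1 / φ) - 1 = 0 := by
  obtain ⟨hT_neg_one, hT_neg_two, hT_neg_three⟩ := tribonacci_neg_one_two_three hT0 hT1 hT2 hT
  set w : ℤ → ℝ := fun n => T n * x (-1) * x 0 + (T n + T (n - 1)) * x 0 + T (n + 1)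
  have hw : ∀ n, w (n + 3) = w (n + 2) + w (n + 1) + w n := fun n => by
    have h0 := hT n
    have h1 := hT (n - 1)
    have h2 := hT (n + 1)
    simp only [w]
    ring_nf at h0 h1 h2 ⊢
    linear_combination (x (-1) * x 0 + x 0) * h0 + x 0 * h1 + h2
  have hx0 : x 0 ≠ 0 := by simpa [hT0, hT_neg_one, hT_neg_two] using hforb (-1) le_rfl
  have hx_eq := eq_div_of_tribonacci_of_ne_zero hw hforb hx
    (by simp [w, hT0, hT_neg_one, hT_neg_two, hT_neg_three, hx0])
    (by simp [w, hT0, hT1, hT_neg_one, hT_neg_two])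
  refine ⟨(tendsto_div_of_tribonacci_int hφ hw ?_).congr fun n => (hx_eq n n.cast_nonneg).symm, ?_⟩
  · simpa [w, hT0, hT1, hT_neg_one, hT_neg_two, hT_neg_three] using hnd
  · have hφ0 : φ ≠ 0 := (zero_lt_one.trans (one_lt_of_tribonacci_root hφ)).ne'
    field_simp
    linear_combination -hφ
end
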